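/- For a semicopula S, the inequality I_S(μ, (f+a)·1_A) ≤ I_S(μ, f·1_A) + a·μ(A) holds for all a ∈ [0,1], measurable A, capacities μ, and measurable f with f + a ∈ [0,1], if and only if S(x+y, z) ≤ S(x, z) + y·z for all x, y, z ∈ [0,1] with x + y ≤ 1. -/

import Mathlib

open Set

def Semicopula (S : ℝ → ℝ → ℝ) : Prop :=
  (∀ x ∈ Icc (0:ℝ) 1, ∀ y ∈ Icc (0:ℝ) 1, S x y ∈ Icc (0:ℝ) 1) ∧
  (∀ x ∈ Icc (0:ℝ) 1, ∀ y ∈ Icc (0:ℝ) 1, ∀ y' ∈ Icc (0:ℝ) 1, y ≤ y' → S x y ≤ S x y') ∧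
  (∀ y ∈ Icc (0:ℝ) 1, ∀ x ∈ Icc (0:ℝ) 1, ∀ x' ∈ Icc (0:ℝ) 1, x ≤ x' → S x y ≤ S x' y) ∧
  (∀ x ∈ Icc (0:ℝ) 1, S x 1 = x ∧ S 1 x = x)

def Capacity {X : Type} (μ : Set X → ℝ) : Prop :=
  (∀ A : Set X, μ A ∈ Icc (0:ℝ) 1) ∧ (∀ A B : Set X, A ⊆ B → μ A ≤ μ B) ∧
  μ (∅ : Set X) = 0 ∧ μ (univ : Set X) = 1

noncomputable def genInt {X : Type} (S : ℝ → ℝ → ℝ) (μ : Set X → ℝ) (f : X → ℝ) : ℝ :=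
  ⨆ t : Icc (0:ℝ) 1, S (t:ℝ) (μ {x | (t:ℝ) ≤ f x})

def Comonotone {X : Type} (f g : X → ℝ) : Prop :=
  ∀ x y, 0 ≤ (f x - f y) * (g x - g y)

def Tcoseminorm (op : ℝ → ℝ → ℝ) : Prop :=
  ∃ S : ℝ → ℝ → ℝ, Semicopula S ∧
    ∀ x ∈ Icc (0:ℝ) 1, ∀ y ∈ Icc (0:ℝ) 1, op x y = 1 - S (1 - x) (1 - y)

/-! The integrand of `I_S(μ, (f + a)·1_A)` at a level `t > a` is `S(t, μ E)` with
`E ⊆ A ∩ {f ≥ t - a}`; splitting `t = (t - a) + a` in the shift inequality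
`S(x + y, z) ≤ S(x, z) + y z` bounds it by `S(t - a, μ{f·1_A ≥ t - a}) + a μ(A)`.
Conversely, `I_S(μ, c·1_A) = S(c, μ A)`, so constant `f = x` and `a = y` on an event of
probability `z` turn the integral inequality back into the shift inequality. -/

open MeasureTheory ProbabilityTheory

namespace Semicopula

variable {S : ℝ → ℝ → ℝ} (hS : Semicopula S)
include hS

theorem nonneg {x y : ℝ} (hx : x ∈ Icc (0:ℝ) 1) (hy : y ∈ Icc (0:ℝ) 1) : 0 ≤ S x y :=
  (hS.1 x hx y hy).1

theorem le_one {x y : ℝ} (hx : x ∈ Icc (0:ℝ) 1) (hy : y ∈ Icc (0:ℝ) 1) : S x y ≤ 1 :=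
  (hS.1 x hx y hy).2

theorem mono_right {x y y' : ℝ} (hx : x ∈ Icc (0:ℝ) 1) (hy : y ∈ Icc (0:ℝ) 1)
    (hy' : y' ∈ Icc (0:ℝ) 1) (h : y ≤ y') : S x y ≤ S x y' :=
  hS.2.1 x hx y hy y' hy' h

theorem mono_left {x x' y : ℝ} (hx : x ∈ Icc (0:ℝ) 1) (hx' : x' ∈ Icc (0:ℝ) 1)
    (hy : y ∈ Icc (0:ℝ) 1) (h : x ≤ x') : S x y ≤ S x' y :=
  hS.2.2.1 y hy x hx x' hx' h

theorem zero_left {y : ℝ} (hy : y ∈ Icc (0:ℝ) 1) : S 0 y = 0 := by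
  have h01 : (0:ℝ) ∈ Icc (0:ℝ) 1 := by norm_num
  have := hS.mono_right h01 hy (by norm_num) hy.2
  linarith [hS.nonneg h01 hy, (hS.2.2.2 0 h01).1]

theorem zero_right {x : ℝ} (hx : x ∈ Icc (0:ℝ) 1) : S x 0 = 0 := by
  have h01 : (0:ℝ) ∈ Icc (0:ℝ) 1 := by norm_num
  have := hS.mono_left hx (by norm_num) h01 hx.2
  linarith [hS.nonneg hx h01, (hS.2.2.2 0 h01).2]

end Semicopula

namespace Capacity

variable {X : Type} {μ : Set X → ℝ} (hμ : Capacity μ)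
include hμ

theorem mem_Icc (A : Set X) : μ A ∈ Icc (0:ℝ) 1 := hμ.1 A

theorem mono {A B : Set X} (h : A ⊆ B) : μ A ≤ μ B := hμ.2.1 A B h

theorem empty : μ ∅ = 0 := hμ.2.2.1

end Capacity

theorem capacity_measureReal {X : Type} [MeasurableSpace X] (μ : Measure X)
    [IsProbabilityMeasure μ] : Capacity μ.real :=
  ⟨fun _ => ⟨measureReal_nonneg, measureReal_le_one⟩,
    fun _ _ h => measureReal_mono h, measureReal_empty,
    probReal_univ⟩

theorem setOf_le_indicator_subset {X : Type} {A : Set X} {g : X → ℝ} {t : ℝ} (ht : 0 < t) :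
    {x | t ≤ A.indicator g x} ⊆ A := fun x hx => by
  by_contra hxA
  simp only [mem_ofPred_eq, indicator_of_notMem hxA] at hx
  linarith

section genInt

variable {X : Type} {S : ℝ → ℝ → ℝ} {μ : Set X → ℝ} {f : X → ℝ}

theorem genInt_le {c : ℝ} (h : ∀ t ∈ Icc (0:ℝ) 1, S t (μ {x | t ≤ f x}) ≤ c) :
    genInt S μ f ≤ c :=
  ciSup_le fun t => h t t.2

variable (hS : Semicopula S) (hμ : Capacity μ)
include hS hμ

theorem le_genInt {t : ℝ} (ht : t ∈ Icc (0:ℝ) 1) : S t (μ {x | t ≤ f x}) ≤ genInt S μ f := by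
  refine le_ciSup (f := fun t : Icc (0:ℝ) 1 => S t (μ {x | (t:ℝ) ≤ f x})) ⟨1, ?_⟩ ⟨t, ht⟩
  rintro _ ⟨s, rfl⟩
  exact hS.le_one s.2 (hμ.mem_Icc _)

theorem genInt_nonneg : 0 ≤ genInt S μ f :=
  (hS.nonneg (by norm_num) (hμ.mem_Icc _)).trans (le_genInt hS hμ (t := 0) (by norm_num))

theorem genInt_indicator_const (A : Set X) {c : ℝ} (hc : c ∈ Icc (0:ℝ) 1) :
    genInt S μ (A.indicator fun _ => c) = S c (μ A) := by
  refine le_antisymm (genInt_le fun t ht => ?_) ?_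
  · rcases ht.1.eq_or_lt with rfl | ht0
    · rw [hS.zero_left (hμ.mem_Icc _)]
      exact hS.nonneg hc (hμ.mem_Icc A)
    have hsub := setOf_le_indicator_subset (A := A) (g := fun _ => c) ht0
    by_cases htc : t ≤ c
    · exact (hS.mono_right ht (hμ.mem_Icc _) (hμ.mem_Icc _) (hμ.mono hsub)).trans
        (hS.mono_left ht hc (hμ.mem_Icc A) htc)
    · have hempty : {x | t ≤ A.indicator (fun _ => c) x} = ∅ :=
        eq_empty_of_forall_notMem fun x hx => htc (by
          simpa only [mem_ofPred_eq, indicator_of_mem (hsub hx)] using hx)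
      rw [hempty, hμ.empty, hS.zero_right ht]
      exact hS.nonneg hc (hμ.mem_Icc A)
  · have hsub : A ⊆ {x | c ≤ A.indicator (fun _ => c) x} := fun x hx => by
      simp only [mem_ofPred_eq, indicator_of_mem hx, le_refl]
    exact (hS.mono_right hc (hμ.mem_Icc _) (hμ.mem_Icc _) (hμ.mono hsub)).trans
      (le_genInt hS hμ hc)

theorem genInt_indicator_add_le
    (hshift : ∀ x ∈ Icc (0:ℝ) 1, ∀ y ∈ Icc (0:ℝ) 1, ∀ z ∈ Icc (0:ℝ) 1, x + y ≤ 1 →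
      S (x + y) z ≤ S x z + y * z)
    (A : Set X) {a : ℝ} (ha : a ∈ Icc (0:ℝ) 1) :
    genInt S μ (A.indicator fun x => f x + a) ≤ genInt S μ (A.indicator f) + a * μ A := by
  refine genInt_le fun t ht => ?_
  set E := {x | t ≤ A.indicator (fun x => f x + a) x}
  have hE := hμ.mem_Icc E
  by_cases hta : t ≤ a
  · have h0 : (0:ℝ) ∈ Icc (0:ℝ) 1 := by norm_num
    have hS_le : S t (μ E) ≤ t * μ E := by
      simpa [hS.zero_left hE] using hshift 0 h0 t ht (μ E) hE (by simpa using ht.2)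
    have hmul : t * μ E ≤ a * μ A := by
      rcases ht.1.eq_or_lt with rfl | ht0
      · simpa using mul_nonneg ha.1 (hμ.mem_Icc A).1
      · exact mul_le_mul hta (hμ.mono (setOf_le_indicator_subset ht0)) hE.1 ha.1
    linarith [genInt_nonneg (f := A.indicator f) hS hμ]
  · push Not at hta
    have hs : t - a ∈ Icc (0:ℝ) 1 := ⟨by linarith, by linarith [ht.2, ha.1]⟩
    have hEA : E ⊆ A := setOf_le_indicator_subset (by linarith [ha.1])
    have hEF : E ⊆ {x | t - a ≤ A.indicator f x} := fun x hx => by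
      have hxA := hEA hx
      simp only [E, mem_ofPred_eq, indicator_of_mem hxA] at hx ⊢
      linarith
    calc S t (μ E) = S (t - a + a) (μ E) := by rw [sub_add_cancel]
      _ ≤ S (t - a) (μ E) + a * μ E := hshift _ hs a ha _ hE (by linarith [ht.2])
      _ ≤ S (t - a) (μ {x | t - a ≤ A.indicator f x}) + a * μ A := by
          gcongr
          · exact hS.mono_right hs hE (hμ.mem_Icc _) (hμ.mono hEF)
          · exact ha.1
          · exact hμ.mono hEA
      _ ≤ genInt S μ (A.indicator f) + a * μ A := by
          gcongr
          exact le_genInt hS hμ hs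

end genInt

theorem stmt5 (S : ℝ → ℝ → ℝ) (hS : Semicopula S) :
    (∀ (X : Type) (μ : Set X → ℝ), Capacity μ → ∀ (A : Set X) (f : X → ℝ),
        (∀ x, f x ∈ Icc (0:ℝ) 1) → ∀ a ∈ Icc (0:ℝ) 1,
        (∀ x, f x + a ∈ Icc (0:ℝ) 1) →
        genInt S μ (A.indicator (fun x => f x + a)) ≤
          genInt S μ (A.indicator f) + a * μ A) ↔
    (∀ x ∈ Icc (0:ℝ) 1, ∀ y ∈ Icc (0:ℝ) 1, ∀ z ∈ Icc (0:ℝ) 1, x + y ≤ 1 →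
        S (x + y) z ≤ S x z + y * z) := by
  constructor
  · intro h x hx y hy z hz hxy
    let μ := bernoulliMeasure true false (⟨z, hz⟩ : unitInterval)
    have hμ := capacity_measureReal μ
    have hxy' : x + y ∈ Icc (0:ℝ) 1 := ⟨add_nonneg hx.1 hy.1, hxy⟩
    have hμz : μ.real {true} = z :=
      bernoulliMeasure_real_apply_of_mem_of_notMem _ (measurableSet_singleton _) rfl (by simp)
    have key := h Bool μ.real hμ {true} (fun _ => x) (fun _ => hx) y hy (fun _ => hxy')
    rwa [genInt_indicator_const hS hμ _ hxy', genInt_indicator_const hS hμ _ hx, hμz] at key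
  · intro hshift X μ hμ A f _ a ha _
    exact genInt_indicator_add_le hS hμ hshift A ha
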